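/- arXiv:1706.09143 — 4 statements merged into one kernel-verified Lean document; each statement's English description precedes it below -/
import Mathlib

section
/- The q-series identity (due to Ramanujan): (1/(q)_∞²) · Σ_{k≥0} (-1)^k q^{(k²+k)/2} = (1/(q)_∞) · Σ_{k≥0} q^{k²+k}/((q)_k)², where (q)_∞ = ∏_{i≥1}(1-q^i) and (q)_k = ∏_{i=1}^k (1-q^i), as an identity of formal power series in q. -/
/-! Let `D_r = Σ_m q^{m(m+r)} / ((q)_m (q)_{m+r})` and `E_r = Σ_m q^{m(m+r+1)} / ((q)_m (q)_{m+r})`.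
Counting partitions by their Durfee `m × (m+r)` rectangle gives `D_r = 1/(q)_∞` for every `r`,
and comparing terms gives `E_r = D_{r+1} - q^{r+1} E_{r+1}`. Unrolling this recursion,
`Σ_k q^{k²+k}/(q)_k² = E_0 = Σ_j (-1)^j q^{j(j+1)/2} D_{j+1} = (1/(q)_∞) Σ_j (-1)^j q^{j(j+1)/2}`.

Modulo `q^{n+1}` all series may be truncated after `n + 1` terms. For the truncations the Durfee
identity becomes a congruence: consecutive truncated `D_r` differ by a single term of order
`(n+1)(n+1+r)`, and the truncated `D_{n+1}` is `1/(q)_{n+1}` up to order `n + 2`. -/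

/- Ramanujan's identity:
   (1/(q)_∞²) Σ_{k≥0} (-1)^k q^{(k²+k)/2} = (1/(q)_∞) Σ_{k≥0} q^{k²+k}/((q)_k)²
   as formal power series in q.  We state the identity coefficientwise: the
   coefficient of q^N of each side can be computed from the truncations
   (q)_{N+1} of (q)_∞ and sums over k ≤ N, since all omitted terms have
   order > N. -/

open PowerSeries Finset

/-- The q-Pochhammer symbol `(q)_k = ∏_{i=1}^k (1 - q^i)` in `ℚ[[q]]`. -/
noncomputable def qPoch (k : ℕ) : PowerSeries ℚ :=
  ∏ i ∈ Finset.range k, (1 - (PowerSeries.X : PowerSeries ℚ) ^ (i + 1))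

lemma qPoch_succ (k : ℕ) : qPoch (k + 1) = qPoch k * (1 - X ^ (k + 1)) :=
  prod_range_succ _ k

lemma qPoch_zero : qPoch 0 = 1 :=
  prod_range_zero _

lemma inv_qPoch_eq_mul_inv_qPoch_succ (k : ℕ) :
    (qPoch k)⁻¹ = (1 - X ^ (k + 1)) * (qPoch (k + 1))⁻¹ := by
  rw [qPoch_succ, PowerSeries.mul_inv_rev, ← mul_assoc,
    PowerSeries.mul_inv_cancel _ (by simp), one_mul]

noncomputable def durfeeSum (n r : ℕ) : ℚ⟦X⟧ :=
  ∑ m ∈ range n, X ^ (m * (m + r)) * ((qPoch m)⁻¹ * (qPoch (m + r))⁻¹)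

noncomputable def shiftedDurfeeSum (n r : ℕ) : ℚ⟦X⟧ :=
  ∑ m ∈ range n, X ^ (m * (m + r + 1)) * ((qPoch m)⁻¹ * (qPoch (m + r))⁻¹)

lemma shiftedDurfeeSum_zero (n : ℕ) :
    shiftedDurfeeSum n 0 = ∑ k ∈ range n, X ^ (k ^ 2 + k) * ((qPoch k)⁻¹) ^ 2 := by
  refine sum_congr rfl fun k _ => ?_
  rw [add_zero, sq, sq, mul_add_one]

lemma shiftedDurfeeSum_eq_durfeeSum_sub (n r : ℕ) :
    shiftedDurfeeSum n r = durfeeSum n (r + 1) - X ^ (r + 1) * shiftedDurfeeSum n (r + 1) := by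
  rw [shiftedDurfeeSum, shiftedDurfeeSum, durfeeSum, mul_sum, ← sum_sub_distrib]
  refine sum_congr rfl fun m _ => ?_
  rw [inv_qPoch_eq_mul_inv_qPoch_succ (m + r), ← add_assoc, ← mul_assoc (X ^ (r + 1)), ← pow_add,
    show r + 1 + m * (m + r + 1 + 1) = m * (m + r + 1) + (m + r + 1) by ring, pow_add]
  ring

lemma durfeeSum_sub_durfeeSum_succ (n r : ℕ) :
    durfeeSum (n + 1) r - durfeeSum (n + 1) (r + 1) =
      -(X ^ ((n + 1) * (n + 1 + r)) * ((qPoch n)⁻¹ * (qPoch (n + 1 + r))⁻¹)) := by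
  induction n with
  | zero =>
    rw [durfeeSum, durfeeSum, sum_range_one, sum_range_one]
    simp only [zero_mul, zero_add, one_mul, pow_zero, qPoch_zero, inv_one, add_comm 1 r]
    rw [inv_qPoch_eq_mul_inv_qPoch_succ r]
    ring
  | succ n ih =>
    have hsucc (s : ℕ) : durfeeSum (n + 1 + 1) s = durfeeSum (n + 1) s +
        X ^ ((n + 1) * (n + 1 + s)) * ((qPoch (n + 1))⁻¹ * (qPoch (n + 1 + s))⁻¹) :=
      sum_range_succ _ _
    rw [hsucc, hsucc, add_sub_add_comm, ih, inv_qPoch_eq_mul_inv_qPoch_succ n,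
      inv_qPoch_eq_mul_inv_qPoch_succ (n + 1 + r),
      show n + 1 + (r + 1) = n + 1 + r + 1 by ring,
      show (n + 1 + 1) * (n + 1 + 1 + r) = (n + 1) * (n + 1 + r + 1) + (n + 1 + r + 1) by ring,
      show (n + 1) * (n + 1 + r + 1) = (n + 1) * (n + 1 + r) + (n + 1) by ring,
      show n + 1 + 1 + r = n + 1 + r + 1 by ring]
    simp only [pow_add]
    ring

lemma X_pow_dvd_durfeeSum_zero_sub (n r : ℕ) :
    (X : ℚ⟦X⟧) ^ (n + 1) ∣ durfeeSum (n + 1) 0 - durfeeSum (n + 1) r := by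
  induction r with
  | zero => simp
  | succ r ih =>
    have hstep : (X : ℚ⟦X⟧) ^ (n + 1) ∣ durfeeSum (n + 1) r - durfeeSum (n + 1) (r + 1) := by
      rw [durfeeSum_sub_durfeeSum_succ, dvd_neg]
      exact (pow_dvd_pow X (Nat.le_mul_of_pos_right _ (by omega))).mul_right _
    simpa using dvd_add ih hstep

lemma X_pow_dvd_durfeeSum_self_sub (n : ℕ) :
    (X : ℚ⟦X⟧) ^ (n + 1) ∣ durfeeSum (n + 1) (n + 1) - (qPoch (n + 1))⁻¹ := by
  rw [durfeeSum, sum_range_succ']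
  simp only [zero_mul, zero_add, pow_zero, one_mul, qPoch_zero, inv_one, add_sub_cancel_right]
  refine dvd_sum fun m _ => (pow_dvd_pow X ?_).mul_right _
  nlinarith

lemma X_pow_dvd_durfeeSum_sub_inv_qPoch (n r : ℕ) :
    (X : ℚ⟦X⟧) ^ (n + 1) ∣ durfeeSum (n + 1) r - (qPoch (n + 1))⁻¹ := by
  have h := dvd_sub (dvd_add (X_pow_dvd_durfeeSum_zero_sub n (n + 1))
    (X_pow_dvd_durfeeSum_self_sub n)) (X_pow_dvd_durfeeSum_zero_sub n r)
  convert h using 1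
  ring

lemma triangle_succ (j : ℕ) : ((j + 1) ^ 2 + (j + 1)) / 2 = (j ^ 2 + j) / 2 + (j + 1) := by
  rw [show (j + 1) ^ 2 + (j + 1) = j ^ 2 + j + 2 * (j + 1) by ring,
    Nat.add_mul_div_left _ _ two_pos]

lemma shiftedDurfeeSum_zero_eq_sum_add (n J : ℕ) :
    shiftedDurfeeSum n 0 =
      ∑ j ∈ range J, (-1) ^ j * X ^ ((j ^ 2 + j) / 2) * durfeeSum n (j + 1) +
        (-1) ^ J * X ^ ((J ^ 2 + J) / 2) * shiftedDurfeeSum n J := by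
  induction J with
  | zero => simp
  | succ J ih =>
    rw [ih, shiftedDurfeeSum_eq_durfeeSum_sub n J, sum_range_succ, triangle_succ, pow_add,
      pow_succ]
    ring

lemma X_pow_dvd_shiftedDurfeeSum_zero_sub (n : ℕ) :
    (X : ℚ⟦X⟧) ^ (n + 1) ∣ shiftedDurfeeSum (n + 1) 0 -
      (∑ j ∈ range (n + 1), (-1) ^ j * X ^ ((j ^ 2 + j) / 2)) * (qPoch (n + 1))⁻¹ := by
  have hremainder : (X : ℚ⟦X⟧) ^ (n + 1) ∣
      (-1) ^ (n + 1) * X ^ (((n + 1) ^ 2 + (n + 1)) / 2) * shiftedDurfeeSum (n + 1) (n + 1) :=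
    ((pow_dvd_pow X (by rw [triangle_succ]; omega)).mul_left _).mul_right _
  rw [shiftedDurfeeSum_zero_eq_sum_add (n + 1) (n + 1), add_sub_right_comm, sum_mul,
    ← sum_sub_distrib]
  refine dvd_add (dvd_sum fun j _ => ?_) hremainder
  rw [← mul_sub]
  exact (X_pow_dvd_durfeeSum_sub_inv_qPoch n (j + 1)).mul_left _

theorem ramanujan_identity (N : ℕ) :
    PowerSeries.coeff N
      ((qPoch (N + 1))⁻¹ ^ 2 *
        ∑ k ∈ Finset.range (N + 1),
          (-1 : PowerSeries ℚ) ^ k * (PowerSeries.X : PowerSeries ℚ) ^ ((k ^ 2 + k) / 2))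
    =
    PowerSeries.coeff N
      ((qPoch (N + 1))⁻¹ *
        ∑ k ∈ Finset.range (N + 1),
          (PowerSeries.X : PowerSeries ℚ) ^ (k ^ 2 + k) * ((qPoch k)⁻¹) ^ 2) := by
  have h := (X_pow_dvd_shiftedDurfeeSum_zero_sub N).mul_left (qPoch (N + 1))⁻¹
  rw [shiftedDurfeeSum_zero] at h
  rw [eq_comm, ← sub_eq_zero, ← map_sub]
  refine X_pow_dvd_iff.mp ?_ N N.lt_succ_self
  convert h using 1
  ring
end

section
/- The graded dimension of the charge-zero subspace F₀ of the fermionic Fock space is given by Σ_{m∈(1/2)ℤ≥0} dim (F₀)_m q^m = Σ_{r≥0} q^{r²}/((q)_r)², where the degree of the basis monomial Ψ^+(−n_1−1/2)⋯Ψ^+(−n_r−1/2)Ψ^−(−k_1−1/2)⋯Ψ^−(−k_r−1/2)·1 is Σ(n_i+1/2) + Σ(k_j+1/2). -/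
/- The graded dimension of the charge-zero part F₀ of the fermionic Fock space:
   Σ_w dim (F₀)_w q^w = Σ_{r≥0} q^{r²}/((q)_r)².
   A basis of (F₀)_w is given by the monomials
   Ψ⁺(−n₁−1/2)⋯Ψ⁺(−n_r−1/2)Ψ⁻(−k₁−1/2)⋯Ψ⁻(−k_r−1/2)·1 with
   n₁ > ⋯ > n_r ≥ 0, k₁ > ⋯ > k_r ≥ 0 and weight
   Σ(nᵢ+1/2) + Σ(kⱼ+1/2) = Σnᵢ + Σkⱼ + r = w, i.e. by pairs of finite subsets
   (S, T) of ℤ≥0 with |S| = |T| and S.sum + T.sum + |S| = w.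
   Stated coefficientwise; truncating the sum at r ≤ N does not affect the
   coefficient of q^N. -/

open PowerSeries Finset

/-- The dimension of the weight-`w` subspace of `F₀`: the number of pairs of
strictly decreasing tuples (finite subsets of ℤ≥0) of equal length `r` with
total weight `w`. -/
noncomputable def dimF0 (w : ℕ) : ℕ :=
  Nat.card {p : Finset ℕ × Finset ℕ //
    p.1.card = p.2.card ∧ p.1.sum id + p.2.sum id + p.1.card = w}

noncomputable def G (k : ℕ) : PowerSeries ℚ := PowerSeries.mk fun n => if k ∣ n then 1 else 0

lemma one_sub_X_pow_mul_G (k : ℕ) : (1 - (X : PowerSeries ℚ) ^ (k + 1)) * G (k + 1) = 1 := by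
  ext n
  rw [sub_mul, one_mul, map_sub]
  rcases n with _ | n
  · simp [G, coeff_X_pow_mul', PowerSeries.coeff_zero_eq_constantCoeff, constantCoeff_mk]
  · rw [PowerSeries.coeff_one]
    simp only [Nat.succ_ne_zero, if_false]
    rw [coeff_X_pow_mul', G, coeff_mk]
    by_cases h : k + 1 ≤ n + 1
    · rw [if_pos h, coeff_mk]
      have : (k + 1 ∣ n + 1) ↔ (k + 1 ∣ n + 1 - (k + 1)) := by
        constructor
        · intro hd; exact (Nat.dvd_sub hd dvd_rfl)
        · intro hd; have := Nat.dvd_add hd (dvd_refl (k+1)); rwa [Nat.sub_add_cancel h] at this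
      rw [if_congr this rfl rfl, sub_self]
    · rw [if_neg h]
      have : ¬ (k + 1 ∣ n + 1) := by
        intro hd
        exact h (Nat.le_of_dvd (Nat.succ_pos n) hd)
      simp [this]

lemma constantCoeff_qPoch (r : ℕ) : constantCoeff (qPoch r) = 1 := by
  rw [qPoch, map_prod]
  apply Finset.prod_eq_one
  intro i _
  simp

lemma qPoch_inv (r : ℕ) : (qPoch r)⁻¹ = ∏ i ∈ range r, G (i + 1) := by
  rw [PowerSeries.inv_eq_iff_mul_eq_one (by rw [constantCoeff_qPoch]; norm_num)]
  rw [qPoch, ← Finset.prod_mul_distrib]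
  exact Finset.prod_eq_one fun i _ => by rw [mul_comm]; exact one_sub_X_pow_mul_G i

def Acnt (r m : ℕ) : ℕ :=
  ((Finset.finsuppAntidiag (range r) m).filter fun l => ∀ i ∈ range r, (i + 1) ∣ l i).card

lemma coeff_qPoch_inv (r m : ℕ) : coeff (R := ℚ) m ((qPoch r)⁻¹) = (Acnt r m : ℚ) := by
  rw [qPoch_inv, PowerSeries.coeff_prod]
  have : ∀ l : ℕ →₀ ℕ, (∏ i ∈ range r, coeff (R := ℚ) (l i) (G (i + 1)))
      = if (∀ i ∈ range r, (i + 1) ∣ l i) then (1:ℚ) else 0 := by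
    intro l
    rw [← Finset.prod_boole]
    exact Finset.prod_congr rfl fun i _ => by rw [G, coeff_mk]
  rw [Finset.sum_congr rfl fun l _ => this l, Finset.sum_boole, Acnt]

def gg (r : ℕ) (c : ℕ → ℕ) (i : ℕ) : ℕ := (r - 1 - i) + ∑ j ∈ Finset.Ico i r, c j

lemma gg_anti (r : ℕ) (c : ℕ → ℕ) {i i' : ℕ} (h : i < i') (h' : i' < r) :
    gg r c i' < gg r c i := by
  have h1 : r - 1 - i' < r - 1 - i := by omega
  have h2 : ∑ j ∈ Finset.Ico i' r, c j ≤ ∑ j ∈ Finset.Ico i r, c j :=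
    Finset.sum_le_sum_of_subset (Finset.Ico_subset_Ico h.le le_rfl)
  exact add_lt_add_of_lt_of_le h1 h2

lemma gg_succ (r : ℕ) (c : ℕ → ℕ) (i : ℕ) (h : i + 1 < r) :
    gg r c i = gg r c (i + 1) + 1 + c i := by
  unfold gg
  rw [Finset.sum_eq_sum_Ico_succ_bot (by omega : i < r)]
  omega

lemma gg_last (r : ℕ) (c : ℕ → ℕ) (h : 0 < r) : gg r c (r - 1) = c (r - 1) := by
  unfold gg
  have : Finset.Ico (r - 1) r = {r - 1} := by ext j; simp [Finset.mem_Ico]; omega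
  rw [this, Finset.sum_singleton]
  omega

lemma gg_sum (r : ℕ) (c : ℕ → ℕ) :
    ∑ i ∈ Finset.range r, gg r c i
      = (∑ j ∈ Finset.range r, (j + 1) * c j) + ∑ i ∈ Finset.range r, i := by
  unfold gg
  rw [Finset.sum_add_distrib]
  have h0 : ∑ i ∈ Finset.range r, (r - 1 - i) = ∑ i ∈ Finset.range r, i :=
    Finset.sum_range_reflect (fun i => i) r
  have h1 : ∀ i ∈ Finset.range r, ∑ j ∈ Finset.Ico i r, c j
      = ∑ j ∈ Finset.range r, if i ≤ j then c j else 0 := by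
    intro i _
    rw [← Finset.sum_filter]
    apply Finset.sum_congr _ (fun _ _ => rfl)
    ext j; simp only [Finset.mem_Ico, Finset.mem_filter, Finset.mem_range]; omega
  rw [Finset.sum_congr rfl h1, Finset.sum_comm]
  have h2 : ∀ j ∈ Finset.range r,
      (∑ i ∈ Finset.range r, if i ≤ j then c j else 0) = (j + 1) * c j := by
    intro j hj
    rw [← Finset.sum_filter]
    have : (Finset.range r).filter (fun i => i ≤ j) = Finset.range (j + 1) := by
      ext i; simp only [Finset.mem_filter, Finset.mem_range] at *; omega
    rw [this, Finset.sum_const, Finset.card_range, smul_eq_mul]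
  rw [Finset.sum_congr rfl h2, h0, add_comm]

lemma gg_injOn (r : ℕ) (c : ℕ → ℕ) : Set.InjOn (gg r c) (Finset.range r) := by
  intro i hi i' hi' h
  simp only [Finset.coe_range, Set.mem_Iio] at hi hi'
  rcases lt_trichotomy i i' with hlt | heq | hgt
  · exact absurd h (gg_anti r c hlt hi').ne'
  · exact heq
  · exact absurd h (gg_anti r c hgt hi).ne

lemma gg_card_image (r : ℕ) (c : ℕ → ℕ) :
    ((Finset.range r).image (gg r c)).card = r := by
  rw [Finset.card_image_of_injOn (gg_injOn r c), Finset.card_range]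

lemma gg_eq_emb (r : ℕ) (c : ℕ → ℕ) {S : Finset ℕ} (hS : S = (Finset.range r).image (gg r c))
    (h : S.card = r) (i : ℕ) (hi : i < r) :
    gg r c i = S.orderEmbOfFin h ⟨r - 1 - i, by omega⟩ := by
  have hmem : ∀ k : Fin r, gg r c (r - 1 - (k : ℕ)) ∈ S := by
    intro k
    rw [hS]
    exact Finset.mem_image_of_mem _ (Finset.mem_range.mpr (by omega))
  have hmono : StrictMono (fun k : Fin r => gg r c (r - 1 - (k : ℕ))) := by
    intro k k' hk
    exact gg_anti r c (by omega) (by omega)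
  have := Finset.orderEmbOfFin_unique h hmem hmono
  have h2 := congrFun this ⟨r - 1 - i, by omega⟩
  simp only at h2
  rw [← h2]
  congr 1
  omega

def Dcnt (r s : ℕ) : ℕ :=
  (((Finset.range (s + 1)).powerset).filter fun S => S.card = r ∧ S.sum id = s).card

lemma Acnt_eq_Dcnt (r m : ℕ) :
    Acnt r m = Dcnt r (m + ∑ i ∈ Finset.range r, i) := by
  classical
  unfold Acnt Dcnt
  apply Finset.card_bij (fun l _ => (Finset.range r).image (gg r (fun j => l j / (j + 1))))
  · -- maps to
    intro l hl
    simp only [Finset.mem_filter, Finset.mem_finsuppAntidiag] at hl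
    obtain ⟨⟨hsum, hsupp⟩, hdvd⟩ := hl
    set c : ℕ → ℕ := fun j => l j / (j + 1) with hc
    have hwsum : ∑ j ∈ Finset.range r, (j + 1) * c j = m := by
      rw [← hsum]
      exact Finset.sum_congr rfl fun j hj => Nat.mul_div_cancel' (hdvd j hj)
    have hS : (∑ i ∈ Finset.range r, gg r c i) = m + ∑ i ∈ Finset.range r, i := by
      rw [gg_sum, hwsum]
    have hsum' : ((Finset.range r).image (gg r c)).sum id
        = m + ∑ i ∈ Finset.range r, i := by
      rw [Finset.sum_image (fun x hx y hy h => gg_injOn r c (by simpa using hx) (by simpa using hy) h)]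
      exact hS
    simp only [Finset.mem_filter, Finset.mem_powerset]
    refine ⟨?_, gg_card_image r c, hsum'⟩
    intro x hx
    simp only [Finset.mem_image] at hx
    obtain ⟨i, hi, rfl⟩ := hx
    have hle : gg r c i ≤ m + ∑ i ∈ Finset.range r, i :=
      hS ▸ Finset.single_le_sum (f := gg r c) (fun _ _ => Nat.zero_le _) hi
    simp only [Finset.mem_range]
    omega
  · -- injective
    intro l hl l' hl' heq
    simp only [Finset.mem_filter, Finset.mem_finsuppAntidiag] at hl hl'
    obtain ⟨⟨hsum, hsupp⟩, hdvd⟩ := hl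
    obtain ⟨⟨hsum', hsupp'⟩, hdvd'⟩ := hl'
    set c : ℕ → ℕ := fun j => l j / (j + 1) with hc
    set c' : ℕ → ℕ := fun j => l' j / (j + 1) with hc'
    set S : Finset ℕ := (Finset.range r).image (gg r c) with hSdef
    have hS' : S = (Finset.range r).image (gg r c') := heq
    have hcard : S.card = r := gg_card_image r c
    have hgg : ∀ i, i < r → gg r c i = gg r c' i := by
      intro i hi
      rw [gg_eq_emb r c hSdef hcard i hi, gg_eq_emb r c' hS' hcard i hi]
    have hceq : ∀ i, i < r → c i = c' i := by
      intro i hi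
      rcases Nat.lt_or_ge (i + 1) r with h2 | h2
      · have e1 := gg_succ r c i h2
        have e2 := gg_succ r c' i h2
        have e3 := hgg i hi
        have e4 := hgg (i + 1) h2
        omega
      · have hir : i = r - 1 := by omega
        have e1 := gg_last r c (by omega)
        have e2 := gg_last r c' (by omega)
        have e3 := hgg i hi
        rw [hir] at e3 ⊢
        omega
    ext j
    rcases Nat.lt_or_ge j r with hj | hj
    · have d1 := hdvd j (Finset.mem_range.mpr hj)
      have d2 := hdvd' j (Finset.mem_range.mpr hj)
      have e1 : (j + 1) * c j = l j := Nat.mul_div_cancel' d1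
      have e2 : (j + 1) * c' j = l' j := Nat.mul_div_cancel' d2
      rw [← e1, ← e2, hceq j hj]
    · have z1 : l j = 0 := by
        by_contra hz
        exact absurd (Finset.mem_range.mp (hsupp (Finsupp.mem_support_iff.mpr hz))) (by omega)
      have z2 : l' j = 0 := by
        by_contra hz
        exact absurd (Finset.mem_range.mp (hsupp' (Finsupp.mem_support_iff.mpr hz))) (by omega)
      rw [z1, z2]
  · -- surjective
    intro S hS
    simp only [Finset.mem_filter, Finset.mem_powerset] at hS
    obtain ⟨hSsub, hScard, hSsum⟩ := hS
    set e := S.orderEmbOfFin hScard with he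
    set ee : ℕ → ℕ := fun k => if h : k < r then e ⟨k, h⟩ else 0 with hee
    set cS : ℕ → ℕ := fun j =>
      if j + 1 = r then ee 0 else ee (r - 1 - j) - ee (r - 2 - j) - 1 with hcS
    have heemono : ∀ k k', k < k' → k' < r → ee k < ee k' := by
      intro k k' h h'
      simp only [hee]
      rw [dif_pos (lt_trans h h'), dif_pos h']
      exact e.strictMono (show (⟨k, lt_trans h h'⟩ : Fin r) < ⟨k', h'⟩ from h)
    have heemem : ∀ k, k < r → ee k ∈ S := by
      intro k hk
      simp only [hee]
      rw [dif_pos hk]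
      exact Finset.orderEmbOfFin_mem S hScard _
    set l : ℕ →₀ ℕ := Finsupp.onFinset (Finset.range r)
      (fun j => if j < r then (j + 1) * cS j else 0)
      (fun j hj => Finset.mem_range.mpr (by by_contra hc; simp [if_neg hc] at hj)) with hl
    set c : ℕ → ℕ := fun j => l j / (j + 1) with hc
    have hlval : ∀ j, j < r → l j = (j + 1) * cS j := by
      intro j hj
      simp only [hl, Finsupp.onFinset_apply, if_pos hj]
    have hcc : ∀ j, j < r → c j = cS j := by
      intro j hj
      simp only [hc, hlval j hj]
      exact Nat.mul_div_cancel_left _ (Nat.succ_pos j)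
    have hgd : ∀ d, d < r → gg r c (r - 1 - d) = ee d := by
      intro d
      induction d with
      | zero =>
        intro hd
        rw [Nat.sub_zero, gg_last r c hd, hcc (r - 1) (by omega)]
        simp only [hcS]
        rw [if_pos (by omega)]
      | succ d ih =>
        intro hd
        have hd' : d < r := by omega
        have h2 : (r - 1 - (d + 1)) + 1 < r := by omega
        have h3 : r - 1 - (d + 1) + 1 = r - 1 - d := by omega
        rw [gg_succ r c _ h2, h3, ih hd', hcc _ (by omega)]
        have hne : ¬ (r - 1 - (d + 1) + 1 = r) := by omega
        simp only [hcS]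
        rw [if_neg hne]
        have h4 : r - 1 - (r - 1 - (d + 1)) = d + 1 := by omega
        have h5 : r - 2 - (r - 1 - (d + 1)) = d := by omega
        rw [h4, h5]
        have := heemono d (d + 1) (by omega) hd
        omega
    have hggS : ∀ i, i < r → gg r c i ∈ S := by
      intro i hi
      have : gg r c i = ee (r - 1 - i) := by
        have := hgd (r - 1 - i) (by omega)
        have h6 : r - 1 - (r - 1 - i) = i := by omega
        rw [h6] at this
        exact this
      rw [this]
      exact heemem _ (by omega)
    have himg : (Finset.range r).image (gg r c) = S := by
      apply Finset.eq_of_subset_of_card_le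
      · intro x hx
        obtain ⟨i, hi, rfl⟩ := Finset.mem_image.mp hx
        exact hggS i (Finset.mem_range.mp hi)
      · rw [gg_card_image r c, hScard]
    have hsumgg : ∑ i ∈ Finset.range r, gg r c i = m + ∑ i ∈ Finset.range r, i := by
      rw [← hSsum, ← himg]
      rw [Finset.sum_image (fun x hx y hy h => gg_injOn r c (by simpa using hx) (by simpa using hy) h)]
      rfl
    have hwsum : ∑ j ∈ Finset.range r, (j + 1) * c j = m := by
      have := gg_sum r c
      omega
    have hlsum : ∑ j ∈ Finset.range r, l j = m := by
      rw [← hwsum]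
      apply Finset.sum_congr rfl
      intro j hj
      rw [hlval j (Finset.mem_range.mp hj), hcc j (Finset.mem_range.mp hj)]
    refine ⟨l, ?_, himg⟩
    simp only [Finset.mem_filter, Finset.mem_finsuppAntidiag]
    refine ⟨⟨hlsum, Finsupp.support_onFinset_subset⟩, ?_⟩
    intro i hi
    rw [hlval i (Finset.mem_range.mp hi)]
    exact Dvd.intro _ rfl

lemma sum_lower {S : Finset ℕ} {r : ℕ} (h : S.card = r) :
    ∑ i ∈ Finset.range r, i ≤ S.sum id := by
  set e := S.orderEmbOfFin h with he
  have himg : Finset.image e Finset.univ = S := by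
    apply Finset.coe_injective
    rw [Finset.coe_image, Finset.coe_univ, Set.image_univ]
    exact Finset.range_orderEmbOfFin S h
  have hsum : S.sum id = ∑ k : Fin r, e k := by
    rw [← himg, Finset.sum_image (fun x _ y _ hxy => e.injective hxy)]
    rfl
  have hle : ∀ n : ℕ, ∀ hn : n < r, n ≤ e ⟨n, hn⟩ := by
    intro n
    induction n with
    | zero => intro hn; exact Nat.zero_le _
    | succ n ih =>
      intro hn
      have h1 : n < r := by omega
      have h2 : e ⟨n, h1⟩ < e ⟨n + 1, hn⟩ := e.strictMono (by exact Nat.lt_succ_self n)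
      have := ih h1
      omega
  rw [hsum, ← Fin.sum_univ_eq_sum_range]
  exact Finset.sum_le_sum fun k _ => hle k k.isLt

lemma Dcnt_eq_zero {r s : ℕ} (h : s < ∑ i ∈ Finset.range r, i) : Dcnt r s = 0 := by
  rw [Dcnt, Finset.card_eq_zero, Finset.filter_eq_empty_iff]
  rintro S - ⟨hcard, hsum⟩
  have := sum_lower hcard
  omega

lemma filter_sum_eq (r s M : ℕ) (h : s ≤ M) :
    (((Finset.range (M + 1)).powerset).filter fun S => S.card = r ∧ S.sum id = s).card
      = Dcnt r s := by
  rw [Dcnt]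
  congr 1
  ext S
  simp only [Finset.mem_filter, Finset.mem_powerset]
  constructor
  · rintro ⟨hsub, hcard, hsum⟩
    refine ⟨?_, hcard, hsum⟩
    intro x hx
    have hxle : id x ≤ S.sum id := Finset.single_le_sum (fun _ _ => Nat.zero_le _) hx
    simp only [id] at hxle
    have hs' : ∑ x ∈ S, x = s := hsum
    simp only [Finset.mem_range]
    omega
  · rintro ⟨hsub, hcard, hsum⟩
    refine ⟨?_, hcard, hsum⟩
    intro x hx
    have := hsub hx
    simp only [Finset.mem_range] at this ⊢
    omega

def PF (N : ℕ) : Finset (Finset ℕ × Finset ℕ) :=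
  ((Finset.range (N + 1)).powerset ×ˢ (Finset.range (N + 1)).powerset).filter
    fun p => p.1.card = p.2.card ∧ p.1.sum id + p.2.sum id + p.1.card = N

lemma dimF0_eq_PF (N : ℕ) : dimF0 N = (PF N).card := by
  rw [dimF0]
  have hset : {p : Finset ℕ × Finset ℕ |
      p.1.card = p.2.card ∧ p.1.sum id + p.2.sum id + p.1.card = N} = ↑(PF N) := by
    ext p
    simp only [Set.mem_setOf_eq, PF, Finset.coe_filter, Finset.mem_product,
      Finset.mem_powerset, Set.mem_setOf_eq]
    constructor
    · rintro ⟨hcard, hsum⟩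
      refine ⟨⟨?_, ?_⟩, hcard, hsum⟩
      · intro x hx
        have hxle : id x ≤ p.1.sum id := Finset.single_le_sum (fun _ _ => Nat.zero_le _) hx
        simp only [id_eq] at hxle
        have hsum' : (∑ x ∈ p.1, x) + (∑ x ∈ p.2, x) + p.1.card = N := hsum
        simp only [Finset.mem_range]
        omega
      · intro x hx
        have hxle : id x ≤ p.2.sum id := Finset.single_le_sum (fun _ _ => Nat.zero_le _) hx
        simp only [id_eq] at hxle
        have hsum' : (∑ x ∈ p.1, x) + (∑ x ∈ p.2, x) + p.1.card = N := hsum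
        simp only [Finset.mem_range]
        omega
    · rintro ⟨-, h⟩
      exact h
  calc Nat.card {p : Finset ℕ × Finset ℕ //
      p.1.card = p.2.card ∧ p.1.sum id + p.2.sum id + p.1.card = N}
      = Set.ncard {p : Finset ℕ × Finset ℕ |
      p.1.card = p.2.card ∧ p.1.sum id + p.2.sum id + p.1.card = N} := rfl
    _ = (PF N).card := by rw [hset, Set.ncard_coe_finset]

lemma PF_card_fiberwise (N : ℕ) :
    (PF N).card = ∑ rs ∈ Finset.range (N + 1) ×ˢ Finset.range (N + 1),
      ((PF N).filter fun p => (p.1.card, p.1.sum id) = rs).card := by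
  apply Finset.card_eq_sum_card_fiberwise
  intro p hp
  simp only [Finset.mem_coe, PF, Finset.mem_filter, Finset.mem_product, Finset.mem_powerset] at hp
  obtain ⟨-, hcard, hsum⟩ := hp
  simp only [Finset.mem_coe, Finset.mem_product, Finset.mem_range]
  omega

lemma fiber_card (N r s : ℕ) (h : r + s ≤ N) :
    ((PF N).filter fun p => (p.1.card, p.1.sum id) = (r, s)).card
      = Dcnt r s * Dcnt r (N - s - r) := by
  have : (PF N).filter (fun p => (p.1.card, p.1.sum id) = (r, s))
      = (((Finset.range (N + 1)).powerset).filter fun S => S.card = r ∧ S.sum id = s)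
        ×ˢ (((Finset.range (N + 1)).powerset).filter
          fun T => T.card = r ∧ T.sum id = N - s - r) := by
    ext p
    simp only [PF, Finset.mem_filter, Finset.mem_product, Finset.mem_powerset,
      Prod.mk.injEq]
    constructor
    · rintro ⟨⟨⟨h1, h2⟩, h3, h4⟩, h5, h6⟩
      exact ⟨⟨h1, h5, h6⟩, h2, by omega, by omega⟩
    · rintro ⟨⟨h1, h2, h3⟩, h4, h5, h6⟩
      exact ⟨⟨⟨h1, h4⟩, by omega, by omega⟩, h2, h3⟩
  rw [this, Finset.card_product, filter_sum_eq r s N (by omega),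
    filter_sum_eq r (N - s - r) N (by omega)]

lemma fiber_card_zero (N r s : ℕ) (h : N < r + s) :
    ((PF N).filter fun p => (p.1.card, p.1.sum id) = (r, s)).card = 0 := by
  rw [Finset.card_eq_zero, Finset.filter_eq_empty_iff]
  intro p hp
  simp only [PF, Finset.mem_filter, Finset.mem_product, Finset.mem_powerset] at hp
  obtain ⟨-, hcard, hsum⟩ := hp
  simp only [Prod.mk.injEq, not_and]
  intro h1 h2
  omega

lemma sigma_sq (r : ℕ) : r ^ 2 = 2 * (∑ i ∈ Finset.range r, i) + r := by
  have h := Finset.sum_range_id_mul_two r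
  rcases r with _ | n
  · simp
  · have h2 : (n + 1) ^ 2 = (n + 1) * n + (n + 1) := by ring
    have h3 : (n + 1) * (n + 1 - 1) = (n + 1) * n := by norm_num
    omega

lemma T_eq_R (N r : ℕ) :
    (∑ s ∈ Finset.range (N + 1),
        if r + s ≤ N then Dcnt r s * Dcnt r (N - s - r) else 0)
      = if r ^ 2 ≤ N then
          ∑ u ∈ Finset.range (N - r ^ 2 + 1),
            Dcnt r (u + ∑ i ∈ Finset.range r, i)
              * Dcnt r ((N - r ^ 2 - u) + ∑ i ∈ Finset.range r, i)
        else 0 := by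
  set σ := ∑ i ∈ Finset.range r, i with hσ
  have hsq : r ^ 2 = 2 * σ + r := sigma_sq r
  by_cases hN : r ^ 2 ≤ N
  · rw [if_pos hN]
    have hsub : Finset.Ico σ (σ + (N - r ^ 2) + 1) ⊆ Finset.range (N + 1) := by
      intro x hx
      simp only [Finset.mem_Ico, Finset.mem_range] at *
      omega
    have hv : ∀ x ∈ Finset.range (N + 1), x ∉ Finset.Ico σ (σ + (N - r ^ 2) + 1) →
        (if r + x ≤ N then Dcnt r x * Dcnt r (N - x - r) else 0) = 0 := by
      intro x hx hnx
      simp only [Finset.mem_range] at hx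
      simp only [Finset.mem_Ico, not_and, not_lt] at hnx
      by_cases hrx : r + x ≤ N
      · rw [if_pos hrx]
        rcases Nat.lt_or_ge x σ with hlt | hge
        · rw [Dcnt_eq_zero hlt, Nat.zero_mul]
        · have hz : N - x - r < σ := by
            have := hnx hge
            omega
          rw [Dcnt_eq_zero hz, Nat.mul_zero]
      · rw [if_neg hrx]
    rw [← Finset.sum_subset hsub hv, Finset.sum_Ico_eq_sum_range]
    have hlen : σ + (N - r ^ 2) + 1 - σ = N - r ^ 2 + 1 := by omega
    rw [hlen]
    apply Finset.sum_congr rfl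
    intro u hu
    simp only [Finset.mem_range] at hu
    have hu' : u ≤ N - r ^ 2 := by omega
    have hc : r + (σ + u) ≤ N := by omega
    rw [if_pos hc]
    congr 1
    · congr 1
      omega
    · congr 1
      omega
  · rw [if_neg hN]
    apply Finset.sum_eq_zero
    intro s hs
    by_cases hrs : r + s ≤ N
    · rw [if_pos hrs]
      rcases Nat.lt_or_ge s σ with hlt | hge
      · rw [Dcnt_eq_zero hlt, Nat.zero_mul]
      · have hz : N - s - r < σ := by omega
        rw [Dcnt_eq_zero hz, Nat.mul_zero]
    · rw [if_neg hrs]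

lemma coeff_term (N r : ℕ) :
    (PowerSeries.coeff (R := ℚ) N) ((PowerSeries.X : PowerSeries ℚ) ^ (r ^ 2) * ((qPoch r)⁻¹) ^ 2)
      = ((if r ^ 2 ≤ N then
          ∑ u ∈ Finset.range (N - r ^ 2 + 1),
            Dcnt r (u + ∑ i ∈ Finset.range r, i)
              * Dcnt r ((N - r ^ 2 - u) + ∑ i ∈ Finset.range r, i)
        else 0 : ℕ) : ℚ) := by
  rw [sq ((qPoch r)⁻¹), PowerSeries.coeff_X_pow_mul']
  by_cases hN : r ^ 2 ≤ N
  · rw [if_pos hN, if_pos hN, PowerSeries.coeff_mul,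
      Finset.Nat.sum_antidiagonal_eq_sum_range_succ_mk]
    push_cast
    apply Finset.sum_congr rfl
    intro u hu
    rw [coeff_qPoch_inv, coeff_qPoch_inv, Acnt_eq_Dcnt, Acnt_eq_Dcnt]
  · rw [if_neg hN, if_neg hN]
    norm_num

theorem graded_dim_F0 (N : ℕ) :
    (dimF0 N : ℚ)
      = PowerSeries.coeff (R := ℚ) N
          (∑ r ∈ Finset.range (N + 1),
            (PowerSeries.X : PowerSeries ℚ) ^ (r ^ 2) * ((qPoch r)⁻¹) ^ 2) := by
  rw [map_sum, Finset.sum_congr rfl (fun r _ => coeff_term N r), ← Nat.cast_sum]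
  congr 1
  rw [dimF0_eq_PF, PF_card_fiberwise, Finset.sum_product]
  apply Finset.sum_congr rfl
  intro r hr
  rw [← T_eq_R]
  apply Finset.sum_congr rfl
  intro s hs
  rcases le_or_gt (r + s) N with h | h
  · rw [if_pos h, fiber_card N r s h]
  · rw [if_neg (by omega), fiber_card_zero N r s h]
end

section
/- In the Clifford algebra CL₁ acting on the fermionic Fock space F, the operators α(r) = Σ_{k∈ℤ+1/2} :Ψ^+(−k)Ψ^−(k+r): satisfy the Heisenberg (level 1) commutation relations [α(r), α(s)] = r δ_{r+s,0} on F. -/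
open scoped TensorProduct

/-- Generators: `(ε, m)` stands for `Ψ⁺(m + 1/2)` if `ε = true` and
`Ψ⁻(m + 1/2)` if `ε = false` (`m : ℤ`). -/
abbrev ClGen := Bool × ℤ

/-- The defining relations of the Clifford algebra CL₁:
`{Ψ^±(r), Ψ^±(s)} = 0` and `{Ψ⁺(r), Ψ⁻(s)} = δ_{r+s,0}`
(for modes `r = m + 1/2`, `s = m' + 1/2`, `r + s = 0` means `m + m' + 1 = 0`). -/
inductive ClRel : FreeAlgebra ℂ ClGen → FreeAlgebra ℂ ClGen → Prop
  | anti (ε : Bool) (m m' : ℤ) :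
      ClRel (FreeAlgebra.ι ℂ ((ε, m) : ClGen) * FreeAlgebra.ι ℂ ((ε, m') : ClGen)
        + FreeAlgebra.ι ℂ ((ε, m') : ClGen) * FreeAlgebra.ι ℂ ((ε, m) : ClGen)) 0
  | mixed (m m' : ℤ) :
      ClRel (FreeAlgebra.ι ℂ ((true, m) : ClGen) * FreeAlgebra.ι ℂ ((false, m') : ClGen)
        + FreeAlgebra.ι ℂ ((false, m') : ClGen) * FreeAlgebra.ι ℂ ((true, m) : ClGen))
        (if m + m' + 1 = 0 then 1 else 0)

/-- The Clifford algebra `CL₁`. -/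
abbrev CL := RingQuot ClRel

/-- The generator `Ψ^ε(m + 1/2)` of `CL₁`. -/
noncomputable def ψ (ε : Bool) (m : ℤ) : CL :=
  RingQuot.mkAlgHom ℂ ClRel (FreeAlgebra.ι ℂ ((ε, m) : ClGen))

/-- The left ideal generated by the positive modes `Ψ^±(m + 1/2)`, `m ≥ 0`. -/
noncomputable def posIdeal : Submodule CL CL :=
  Submodule.span CL {x : CL | ∃ (ε : Bool) (m : ℤ), 0 ≤ m ∧ x = ψ ε m}

/-- The Fock module `F = CL₁ / CL₁·{positive modes}`. -/
abbrev FockF := CL ⧸ posIdeal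

/-- The vacuum vector `1 ∈ F`. -/
noncomputable def vac : FockF := Submodule.Quotient.mk 1

/-- The normally ordered monomial
`Ψ⁺(−n₁−1/2)⋯Ψ⁺(−n_r−1/2) Ψ⁻(−k₁−1/2)⋯Ψ⁻(−k_s−1/2)·1` attached to the pair
of finite sets `S = {n₁ > ⋯ > n_r}`, `T = {k₁ > ⋯ > k_s}` of nonnegative
integers. -/
noncomputable def fmono (S T : Finset ℕ) : FockF :=
  ((((S.sort (· ≥ ·)).map fun n => ψ true (-(n : ℤ) - 1)).prod *
      ((T.sort (· ≥ ·)).map fun n => ψ false (-(n : ℤ) - 1)).prod) : CL) • vac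



/-- Truncation of `α(r) = Σ_{k∈ℤ+1/2} :Ψ⁺(−k)Ψ⁻(k+r):` to `k = j + 1/2`,
`|j| ≤ N`; fermionic normal ordering carries a minus sign when the factors are
reordered. -/
noncomputable def αTrunc (r : ℤ) (N : ℕ) : CL :=
  ∑ j ∈ Finset.Icc (-(N : ℤ)) (N : ℤ),
    (if 0 ≤ j + r then ψ true (-j - 1) * ψ false (j + r)
     else -(ψ false (j + r) * ψ true (-j - 1)))


-- stage 1: relations
lemma psi_anti (ε : Bool) (m m' : ℤ) :
    ψ ε m * ψ ε m' = -(ψ ε m' * ψ ε m) := by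
  have h := RingQuot.mkAlgHom_rel ℂ (ClRel.anti ε m m')
  simp only [map_add, map_mul, map_zero] at h
  rw [eq_neg_iff_add_eq_zero]
  exact h

lemma psi_mixed (m m' : ℤ) :
    ψ true m * ψ false m' =
      (if m + m' + 1 = 0 then (1 : CL) else 0) - ψ false m' * ψ true m := by
  have h := RingQuot.mkAlgHom_rel ℂ (ClRel.mixed m m')
  simp only [map_add, map_mul] at h
  unfold ψ
  rw [eq_sub_iff_add_eq, h]
  split_ifs <;> simp

lemma psi_mixed' (m m' : ℤ) :
    ψ false m' * ψ true m =
      (if m + m' + 1 = 0 then (1 : CL) else 0) - ψ true m * ψ false m' := by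
  rw [psi_mixed]
  exact (sub_sub_cancel _ _).symm

lemma psi_mem_posIdeal (ε : Bool) (m : ℤ) (h : 0 ≤ m) : ψ ε m ∈ posIdeal :=
  Submodule.subset_span ⟨ε, m, h, rfl⟩

lemma mul_mem_posIdeal (x y : CL) (h : y ∈ posIdeal) : x * y ∈ posIdeal := by
  simpa [smul_eq_mul] using posIdeal.smul_mem x h
-- stage 2: tameness
lemma psi_tame_gen (ε ε' : Bool) (m m' : ℤ) (hm : -m' ≤ m) :
    ψ ε m * ψ ε' m' = (-ψ ε' m') * ψ ε m := by
  have hne : ¬ (m + m' + 1 = 0) := by omega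
  have hne' : ¬ (m' + m + 1 = 0) := by omega
  cases ε <;> cases ε'
  · rw [psi_anti]; exact (neg_mul (ψ false m') (ψ false m)).symm
  · rw [psi_mixed' m' m, if_neg hne', zero_sub]; exact (neg_mul (ψ true m') (ψ false m)).symm
  · rw [psi_mixed m m', if_neg hne, zero_sub]; exact (neg_mul (ψ false m') (ψ true m)).symm
  · rw [psi_anti]; exact (neg_mul (ψ true m') (ψ true m)).symm

lemma cl_tame (z : CL) :
    ∃ M : ℕ, ∀ (ε : Bool) (m : ℤ), (M : ℤ) ≤ m → ∃ y : CL, ψ ε m * z = y * ψ ε m := by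
  obtain ⟨w, rfl⟩ := RingQuot.mkAlgHom_surjective ℂ ClRel z
  induction w using FreeAlgebra.induction with
  | grade0 c =>
      refine ⟨0, fun ε m _ => ⟨algebraMap ℂ CL c, ?_⟩⟩
      rw [AlgHom.commutes]
      exact (Algebra.commutes c _).symm
  | grade1 g =>
      obtain ⟨ε', m'⟩ := g
      refine ⟨(-m').toNat, fun ε m hm => ⟨-ψ ε' m', ?_⟩⟩
      have : -m' ≤ m := le_trans (Int.self_le_toNat _) hm
      exact psi_tame_gen ε ε' m m' this
  | mul w₁ w₂ ih₁ ih₂ =>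
      obtain ⟨M₁, h₁⟩ := ih₁
      obtain ⟨M₂, h₂⟩ := ih₂
      refine ⟨max M₁ M₂, fun ε m hm => ?_⟩
      have hm₁ : (M₁ : ℤ) ≤ m := le_trans (by exact_mod_cast le_max_left M₁ M₂) hm
      have hm₂ : (M₂ : ℤ) ≤ m := le_trans (by exact_mod_cast le_max_right M₁ M₂) hm
      obtain ⟨y₁, hy₁⟩ := h₁ ε m hm₁
      obtain ⟨y₂, hy₂⟩ := h₂ ε m hm₂
      refine ⟨y₁ * y₂, ?_⟩
      rw [map_mul, ← mul_assoc, hy₁, mul_assoc, hy₂, ← mul_assoc]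
  | add w₁ w₂ ih₁ ih₂ =>
      obtain ⟨M₁, h₁⟩ := ih₁
      obtain ⟨M₂, h₂⟩ := ih₂
      refine ⟨max M₁ M₂, fun ε m hm => ?_⟩
      have hm₁ : (M₁ : ℤ) ≤ m := le_trans (by exact_mod_cast le_max_left M₁ M₂) hm
      have hm₂ : (M₂ : ℤ) ≤ m := le_trans (by exact_mod_cast le_max_right M₁ M₂) hm
      obtain ⟨y₁, hy₁⟩ := h₁ ε m hm₁
      obtain ⟨y₂, hy₂⟩ := h₂ ε m hm₂
      exact ⟨y₁ + y₂, by rw [map_add, mul_add, hy₁, hy₂, add_mul]⟩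

/-- `annB M v` : all modes `ψ ε m`, `m ≥ M`, kill `v`. -/
def annB (M : ℕ) (v : FockF) : Prop :=
  ∀ (ε : Bool) (m : ℤ), (M : ℤ) ≤ m → ψ ε m • v = 0

lemma exists_annB (v : FockF) : ∃ M : ℕ, annB M v := by
  obtain ⟨x, rfl⟩ := Submodule.Quotient.mk_surjective posIdeal v
  obtain ⟨M, hM⟩ := cl_tame x
  refine ⟨M, fun ε m hm => ?_⟩
  obtain ⟨y, hy⟩ := hM ε m hm
  have h0 : (0:ℤ) ≤ m := le_trans (Int.ofNat_nonneg M) hm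
  have : ψ ε m * x ∈ posIdeal := by
    rw [hy]; exact mul_mem_posIdeal y _ (psi_mem_posIdeal ε m h0)
  rw [← Submodule.Quotient.mk_smul, smul_eq_mul]
  exact (Submodule.Quotient.mk_eq_zero _).2 this
-- stage 3: the quadratics e a i and their commutation
noncomputable def e (a i : ℤ) : CL := ψ true (-i - 1) * ψ false (i + a)

lemma quartic (A B A' B' c₁ c₂ : CL)
    (h1 : B * A' = c₁ - A' * B) (h2 : B' * A = c₂ - A * B')
    (h3 : A' * A = -(A * A')) (h4 : B' * B = -(B * B'))
    (hc1 : A * c₁ = c₁ * A) (hc2 : A' * c₂ = c₂ * A') :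
    A * B * (A' * B') = A' * B' * (A * B) + c₁ * (A * B') - c₂ * (A' * B) := by
  have k1 : A * B * (A' * B') = c₁ * (A * B') - A * A' * (B * B') := by
    have h : A * B * (A' * B') = A * ((B * A') * B') := by noncomm_ring
    rw [h, h1, sub_mul, mul_sub, ← mul_assoc A c₁ B', hc1, mul_assoc c₁ A B']
    have h' : A * (A' * B * B') = A * A' * (B * B') := by noncomm_ring
    rw [h']
  have k2 : A' * B' * (A * B) = c₂ * (A' * B) - A * A' * (B * B') := by
    have h : A' * B' * (A * B) = A' * ((B' * A) * B) := by noncomm_ring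
    rw [h, h2, sub_mul, mul_sub, ← mul_assoc A' c₂ B, hc2, mul_assoc c₂ A' B]
    have h' : A' * (A * B' * B) = (A' * A) * (B' * B) := by noncomm_ring
    rw [h', h3, h4, neg_mul_neg (A*A') (B*B')]
  rw [k1, k2]; abel

lemma comm_ee (a b i j : ℤ) :
    e a i * e b j = e b j * e a i
      + (if j = i + a then e (a + b) i else 0)
      - (if j = i - b then ψ true (-j - 1) * ψ false (i + a) else 0) := by
  have hq := quartic (ψ true (-i-1)) (ψ false (i+a)) (ψ true (-j-1)) (ψ false (j+b))
    ((if (-j-1) + (i+a) + 1 = 0 then (1:CL) else 0))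
    ((if (-i-1) + (j+b) + 1 = 0 then (1:CL) else 0))
    (psi_mixed' (-j-1) (i+a)) (psi_mixed' (-i-1) (j+b))
    (psi_anti true (-j-1) (-i-1)) (psi_anti false (j+b) (i+a))
    (by split_ifs <;> simp) (by split_ifs <;> simp)
  have hA : (if (-j-1) + (i+a) + 1 = 0 then (1:CL) else 0) *
      (ψ true (-i-1) * ψ false (j+b)) = (if j = i + a then e (a+b) i else 0) := by
    by_cases h : j = i + a
    · rw [if_pos (by omega), if_pos h, one_mul, e]
      have : i + (a + b) = j + b := by omega
      rw [this]
    · rw [if_neg (by omega), if_neg h, zero_mul]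
  have hB : (if (-i-1) + (j+b) + 1 = 0 then (1:CL) else 0) *
      (ψ true (-j-1) * ψ false (i+a)) =
      (if j = i - b then ψ true (-j-1) * ψ false (i+a) else 0) := by
    by_cases h : j = i - b
    · rw [if_pos (by omega), if_pos h, one_mul]
    · rw [if_neg (by omega), if_neg h, zero_mul]
  show e a i * e b j = _
  rw [e, e, hq, hA, hB]

-- action lemmas
lemma G1 {M : ℕ} {v : FockF} (hv : annB M v) {p q : ℤ} (hq : (M:ℤ) ≤ q) :
    (ψ true p * ψ false q) • v = 0 := by
  rw [mul_smul, hv false q hq, smul_zero]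

lemma G2 {M : ℕ} {v : FockF} (hv : annB M v) {p q : ℤ} (hp : (M:ℤ) ≤ p) :
    (ψ true p * ψ false q) • v = if p + q + 1 = 0 then v else 0 := by
  rw [psi_mixed p q, sub_smul, mul_smul, hv true p hp, smul_zero, sub_zero]
  split_ifs
  · exact one_smul _ _
  · exact zero_smul _ _

lemma F1 {M : ℕ} {v : FockF} (hv : annB M v) {a i : ℤ} (h : (M:ℤ) ≤ i + a) :
    e a i • v = 0 := G1 hv h

lemma F2 {M : ℕ} {v : FockF} (hv : annB M v) {a i : ℤ} (h : (M:ℤ) ≤ -i - 1) :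
    e a i • v = if a = 0 then v else 0 := by
  rw [e, G2 hv h]
  by_cases ha : a = 0
  · rw [if_pos (by omega), if_pos ha]
  · rw [if_neg (by omega), if_neg ha]
-- stage 4: sums over windows
noncomputable def S (a : ℤ) (N : ℕ) (v : FockF) : FockF :=
  ∑ j ∈ Finset.Icc (-(N : ℤ)) (N : ℤ), e a j • v

lemma sum_Icc_split (f : ℤ → FockF) (a b c : ℤ) (h1 : a ≤ b) (h2 : b ≤ c + 1) :
    ∑ i ∈ Finset.Icc a c, f i
      = (∑ i ∈ Finset.Icc a (b - 1), f i) + ∑ i ∈ Finset.Icc b c, f i := by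
  rw [← Finset.sum_union]
  · congr 1
    ext x
    simp only [Finset.mem_union, Finset.mem_Icc]
    omega
  · rw [Finset.disjoint_left]
    intro x hx hx'
    simp only [Finset.mem_Icc] at hx hx'
    omega

lemma sum_Icc_const (f : ℤ → FockF) (a b : ℤ) (u : FockF)
    (h : ∀ i, a ≤ i → i ≤ b → f i = u) :
    ∑ i ∈ Finset.Icc a b, f i = (b + 1 - a).toNat • u := by
  have h' : ∀ i ∈ Finset.Icc a b, f i = u := by
    intro i hi
    rw [Finset.mem_Icc] at hi
    exact h i hi.1 hi.2
  rw [Finset.sum_congr rfl h', Finset.sum_const, Int.card_Icc]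

lemma sum_Icc_zero (f : ℤ → FockF) (a b : ℤ)
    (h : ∀ i, a ≤ i → i ≤ b → f i = 0) :
    ∑ i ∈ Finset.Icc a b, f i = 0 := by
  rw [sum_Icc_const f a b 0 h, smul_zero]

lemma S_zero (a : ℤ) (N : ℕ) : S a N 0 = 0 := by
  simp [S]

lemma S_if (a : ℤ) (N : ℕ) (c : Prop) [Decidable c] (v : FockF) :
    S a N (if c then v else 0) = if c then S a N v else 0 := by
  split_ifs <;> simp [S_zero]

lemma S_tail {M : ℕ} {v : FockF} (hv : annB M v) (a : ℤ) {N₂ N₁ : ℕ}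
    (h2 : (M : ℤ) + |a| ≤ (N₂ : ℤ)) (h12 : N₂ ≤ N₁) :
    S a N₁ v = S a N₂ v + (N₁ - N₂ : ℕ) • (if a = 0 then v else 0) := by
  have hMN : (M : ℤ) ≤ N₂ := by have := abs_nonneg a; omega
  rw [S, sum_Icc_split _ _ (-(N₂:ℤ)) _ (by push_cast; omega) (by push_cast; omega),
    sum_Icc_split _ (-(N₂:ℤ)) ((N₂:ℤ)+1) _ (by push_cast; omega) (by push_cast; omega)]
  have hleft : ∑ i ∈ Finset.Icc (-(N₁:ℤ)) (-(N₂:ℤ) - 1), e a i • v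
      = (N₁ - N₂ : ℕ) • (if a = 0 then v else 0) := by
    rw [sum_Icc_const _ _ _ (if a = 0 then v else 0)
      (fun i h1 h2' => F2 hv (by omega))]
    congr 1
    omega
  have hmid : ∑ i ∈ Finset.Icc (-(N₂:ℤ)) ((N₂:ℤ) + 1 - 1), e a i • v = S a N₂ v := by
    rw [S]; congr 1; congr 1; omega
  have hright : ∑ i ∈ Finset.Icc ((N₂:ℤ) + 1) (N₁ : ℤ), e a i • v = 0 :=
    sum_Icc_zero _ _ _ fun i h1 h2' => F1 hv (by
      have := neg_abs_le a
      have := le_abs_self a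
      omega)
  rw [hleft, hmid, hright, add_zero, add_comm]
-- stage 5: moving one far quadratic through a window sum
lemma e_smul_S (a b i : ℤ) (N : ℕ) (v : FockF) :
    e a i • S b N v = S b N (e a i • v)
      + (if i + a ∈ Finset.Icc (-(N:ℤ)) (N:ℤ) then e (a+b) i • v else 0)
      - (if i - b ∈ Finset.Icc (-(N:ℤ)) (N:ℤ)
          then (ψ true (-(i-b) - 1) * ψ false (i+a)) • v else 0) := by
  rw [S, Finset.smul_sum]
  have hterm : ∀ j ∈ Finset.Icc (-(N:ℤ)) (N:ℤ),
      e a i • (e b j • v)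
        = e b j • (e a i • v) + (if j = i + a then e (a+b) i • v else 0)
          - (if j = i - b then (ψ true (-j - 1) * ψ false (i+a)) • v else 0) := by
    intro j _
    rw [← mul_smul, comm_ee a b i j, sub_smul, add_smul, mul_smul]
    congr 1
    · congr 1
      split_ifs
      · rfl
      · exact zero_smul _ _
    · split_ifs
      · rfl
      · exact zero_smul _ _
  rw [Finset.sum_congr rfl hterm, Finset.sum_sub_distrib, Finset.sum_add_distrib]
  have k1 : (∑ j ∈ Finset.Icc (-(N:ℤ)) (N:ℤ), if j = i + a then e (a+b) i • v else 0)
      = (if i + a ∈ Finset.Icc (-(N:ℤ)) (N:ℤ) then e (a+b) i • v else 0) :=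
    Finset.sum_ite_eq' (Finset.Icc (-(N:ℤ)) (N:ℤ)) (i+a) (fun _ => e (a+b) i • v)
  have k2 : (∑ j ∈ Finset.Icc (-(N:ℤ)) (N:ℤ),
        if j = i - b then (ψ true (-j - 1) * ψ false (i+a)) • v else 0)
      = (if i - b ∈ Finset.Icc (-(N:ℤ)) (N:ℤ)
          then (ψ true (-(i-b) - 1) * ψ false (i+a)) • v else 0) :=
    Finset.sum_ite_eq' (Finset.Icc (-(N:ℤ)) (N:ℤ)) (i-b)
      (fun j => (ψ true (-j - 1) * ψ false (i+a)) • v)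
  rw [k1, k2]
  rfl

lemma L3pos {M : ℕ} {v : FockF} (hv : annB M v) (a b : ℤ) {N : ℕ} {i : ℤ}
    (hN : (M:ℤ) + |a| + |b| + |a+b| ≤ (N:ℤ)) (hi : (N:ℤ) < i) :
    e a i • S b N v = 0 := by
  have ha := abs_nonneg a; have hb := abs_nonneg b; have hab := abs_nonneg (a+b)
  have h1 : e a i • v = 0 := F1 hv (by have := neg_abs_le a; omega)
  have h2 : e (a+b) i • v = 0 := F1 hv (by have := neg_abs_le (a+b); omega)
  have h3 : (ψ true (-(i-b) - 1) * ψ false (i+a)) • v = 0 :=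
    G1 hv (by have := neg_abs_le a; omega)
  rw [e_smul_S, h1, h2, h3, S_zero]
  simp

lemma L3neg {M : ℕ} {v : FockF} (hv : annB M v) (a b : ℤ) {N : ℕ} {i : ℤ}
    (hN : (M:ℤ) + |a| + |b| + |a+b| ≤ (N:ℤ)) (hi : i < -(N:ℤ)) :
    e a i • S b N v = (if a = 0 then S b N v else 0)
      + (((if -(N:ℤ) ≤ i + a then 1 else 0)
          - (if -(N:ℤ) ≤ i - b then 1 else 0) : ℤ)) • (if a + b = 0 then v else 0) := by
  have ha := abs_nonneg a; have hb := abs_nonneg b; have hab := abs_nonneg (a+b)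
  have ha1 := neg_abs_le a; have ha2 := le_abs_self a
  have hb1 := neg_abs_le b; have hb2 := le_abs_self b
  have h1 : e a i • v = if a = 0 then v else 0 := F2 hv (by omega)
  have h2 : e (a+b) i • v = if a + b = 0 then v else 0 := F2 hv (by omega)
  have h3 : (ψ true (-(i-b) - 1) * ψ false (i+a)) • v = if a + b = 0 then v else 0 := by
    rw [G2 hv (by omega)]
    by_cases h : a + b = 0
    · rw [if_pos (by omega), if_pos h]
    · rw [if_neg (by omega), if_neg h]
  have hm1 : (i + a ∈ Finset.Icc (-(N:ℤ)) (N:ℤ)) ↔ -(N:ℤ) ≤ i + a := by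
    rw [Finset.mem_Icc]; omega
  have hm2 : (i - b ∈ Finset.Icc (-(N:ℤ)) (N:ℤ)) ↔ -(N:ℤ) ≤ i - b := by
    rw [Finset.mem_Icc]; omega
  rw [e_smul_S, h1, h2, h3, S_if]
  by_cases c1 : -(N:ℤ) ≤ i + a <;> by_cases c2 : -(N:ℤ) ≤ i - b <;>
    simp only [hm1, hm2, c1, c2, if_true, if_false, sub_self, zero_smul, one_smul,
      sub_zero, zero_sub, neg_smul, add_zero] <;>
    abel
-- stage 6: the diagonal double-sum (Part A)
lemma sum_shift (g : ℤ → FockF) (c d t : ℤ) :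
    ∑ i ∈ Finset.Icc c d, g (i - t) = ∑ i ∈ Finset.Icc (c - t) (d - t), g i := by
  rw [show Finset.Icc (c - t) (d - t) = Finset.map (addRightEmbedding (-t)) (Finset.Icc c d) by
        rw [Finset.map_add_right_Icc]; congr 1 <;> omega,
      Finset.sum_map]
  apply Finset.sum_congr rfl
  intro i _
  have : i - t = addRightEmbedding (-t) i := by
    simp [addRightEmbedding]
    omega
  rw [this]

lemma window_eval {M : ℕ} {v : FockF} (hv : annB M v) (c l u : ℤ)
    (hl : l ≤ -(M:ℤ)) (hu : (M:ℤ) + |c| - 1 ≤ u) :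
    ∑ i ∈ Finset.Icc l u, e c i • v
      = (-(M:ℤ) - l).toNat • (if c = 0 then v else 0)
        + ∑ i ∈ Finset.Icc (-(M:ℤ)) ((M:ℤ) + |c| - 1), e c i • v := by
  have hc := abs_nonneg c
  rw [sum_Icc_split _ l (-(M:ℤ)) u hl (by omega),
    sum_Icc_split _ (-(M:ℤ)) ((M:ℤ) + |c|) u (by omega) (by omega)]
  have h1 : ∑ i ∈ Finset.Icc l (-(M:ℤ) - 1), e c i • v
      = (-(M:ℤ) - l).toNat • (if c = 0 then v else 0) := by
    rw [sum_Icc_const _ _ _ _ (fun i hi1 hi2 => F2 hv (by omega))]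
    congr 1
    omega
  have h3 : ∑ i ∈ Finset.Icc ((M:ℤ) + |c|) u, e c i • v = 0 :=
    sum_Icc_zero _ _ _ fun i hi1 hi2 => F1 hv (by have := neg_abs_le c; omega)
  rw [h1, h3, add_zero, show (M:ℤ) + |c| - 1 = (M:ℤ) + |c| - 1 from rfl]

lemma S_exchange (a b : ℤ) (N : ℕ) (v : FockF) :
    ∑ i ∈ Finset.Icc (-(N:ℤ)) (N:ℤ), S b N (e a i • v) = S b N (S a N v) := by
  simp only [S, Finset.smul_sum]
  exact Finset.sum_comm

lemma partA {M : ℕ} {v : FockF} (hv : annB M v) (r s : ℤ) {N : ℕ}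
    (hN : (M:ℤ) + |r| + |s| + |r + s| + 1 ≤ (N:ℤ)) :
    S r N (S s N v) - S s N (S r N v) = (if r + s = 0 then (r:ℤ) else 0) • v := by
  have har := abs_nonneg r; have has := abs_nonneg s; have hars := abs_nonneg (r+s)
  have har1 := neg_abs_le r; have har2 := le_abs_self r
  have has1 := neg_abs_le s; have has2 := le_abs_self s
  set I := Finset.Icc (-(N:ℤ)) (N:ℤ) with hI
  set g : ℤ → FockF := fun i => e (r + s) i • v with hg
  -- expand the first nesting
  have step : S r N (S s N v)
      = S s N (S r N v)
        + ((∑ i ∈ I, if i + r ∈ I then g i else 0)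
          - ∑ i ∈ I, if i - s ∈ I then (ψ true (-(i-s) - 1) * ψ false (i+r)) • v else 0) := by
    have expand : S r N (S s N v) = ∑ i ∈ I, (S s N (e r i • v)
        + (if i + r ∈ I then g i else 0)
        - (if i - s ∈ I then (ψ true (-(i-s) - 1) * ψ false (i+r)) • v else 0)) := by
      rw [S]
      exact Finset.sum_congr rfl fun i _ => e_smul_S r s i N v
    rw [expand, Finset.sum_sub_distrib, Finset.sum_add_distrib, S_exchange]
    abel
  rw [step]
  -- now the two ite-sums
  have hT2val : ∀ i : ℤ, (ψ true (-(i-s) - 1) * ψ false (i+r)) = e (r+s) (i - s) := by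
    intro i
    rw [e]
    congr 2
    omega
  have hT1 : (∑ i ∈ I, if i + r ∈ I then g i else 0)
      = ∑ i ∈ Finset.Icc (max (-(N:ℤ)) (-(N:ℤ) - r)) (min (N:ℤ) ((N:ℤ) - r)), g i := by
    rw [← Finset.sum_filter]
    congr 1
    ext x
    simp only [Finset.mem_filter, hI, Finset.mem_Icc, le_max_iff, min_le_iff,
      max_le_iff, le_min_iff]
    omega
  have hT2 : (∑ i ∈ I, if i - s ∈ I then (ψ true (-(i-s) - 1) * ψ false (i+r)) • v else 0)
      = ∑ i ∈ Finset.Icc (max (-(N:ℤ)) (-(N:ℤ) - s)) (min (N:ℤ) ((N:ℤ) - s)), g i := by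
    have : (∑ i ∈ I, if i - s ∈ I then (ψ true (-(i-s) - 1) * ψ false (i+r)) • v else 0)
        = ∑ i ∈ Finset.Icc (max (-(N:ℤ)) (-(N:ℤ) + s)) (min (N:ℤ) ((N:ℤ) + s)), g (i - s) := by
      rw [← Finset.sum_filter]
      have hset : Finset.filter (fun i => i - s ∈ I) I
          = Finset.Icc (max (-(N:ℤ)) (-(N:ℤ) + s)) (min (N:ℤ) ((N:ℤ) + s)) := by
        ext x
        simp only [Finset.mem_filter, hI, Finset.mem_Icc, max_le_iff, le_min_iff]
        omega
      rw [hset]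
      exact Finset.sum_congr rfl fun i _ => by rw [hT2val i, hg]
    rw [this, sum_shift]
    congr 2 <;> omega
  rw [hT1, hT2,
    window_eval hv (r+s) (max (-(N:ℤ)) (-(N:ℤ) - r)) (min (N:ℤ) ((N:ℤ) - r))
      (max_le (by omega) (by omega)) (le_min (by omega) (by omega)),
    window_eval hv (r+s) (max (-(N:ℤ)) (-(N:ℤ) - s)) (min (N:ℤ) ((N:ℤ) - s))
      (max_le (by omega) (by omega)) (le_min (by omega) (by omega))]
  set C := ∑ i ∈ Finset.Icc (-(M:ℤ)) ((M:ℤ) + |r+s| - 1), g i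
  set δ := (if r + s = 0 then v else 0) with hδ
  have hmr : max (-(N:ℤ)) (-(N:ℤ) - r) ≤ -(M:ℤ) := max_le (by omega) (by omega)
  have hms : max (-(N:ℤ)) (-(N:ℤ) - s) ≤ -(M:ℤ) := max_le (by omega) (by omega)
  rw [← natCast_zsmul δ ((-(M:ℤ) - max (-(N:ℤ)) (-(N:ℤ) - r)).toNat),
    ← natCast_zsmul δ ((-(M:ℤ) - max (-(N:ℤ)) (-(N:ℤ) - s)).toNat),
    Int.toNat_of_nonneg (sub_nonneg.mpr hmr), Int.toNat_of_nonneg (sub_nonneg.mpr hms),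
    add_sub_add_right_eq_sub, ← sub_smul, add_sub_cancel_left]
  by_cases h : r + s = 0
  · rw [hδ, if_pos h, if_pos h]
    congr 1
    rcases le_total r 0 with hr | hr
    · rw [max_eq_right (by omega : -(N:ℤ) ≤ -(N:ℤ) - r),
        max_eq_left (by omega : -(N:ℤ) - s ≤ -(N:ℤ))]
      omega
    · rw [max_eq_left (by omega : -(N:ℤ) - r ≤ -(N:ℤ)),
        max_eq_right (by omega : -(N:ℤ) ≤ -(N:ℤ) - s)]
      omega
  · rw [hδ, if_neg h, if_neg h, smul_zero, zero_smul]
-- stage 7: tails, αTrunc decomposition, and the main computation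
lemma S_sub (a : ℤ) (N : ℕ) (x y : FockF) : S a N (x - y) = S a N x - S a N y := by
  simp [S, smul_sub, Finset.sum_sub_distrib]

lemma S_nsmul (a : ℤ) (N : ℕ) (n : ℕ) (x : FockF) : S a N (n • x) = n • S a N x := by
  rw [S, S]
  have h1 : ∑ j ∈ Finset.Icc (-(N:ℤ)) (N:ℤ), e a j • n • x
      = ∑ j ∈ Finset.Icc (-(N:ℤ)) (N:ℤ), n • (e a j • x) :=
    Finset.sum_congr rfl fun j _ => smul_comm (e a j) n x
  rw [h1, ← Finset.smul_sum]

lemma bterm {M : ℕ} {v : FockF} (hv : annB M v) (r s : ℤ) {N₂ : ℕ}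
    (h2 : (M:ℤ) + |r| + |s| + |r + s| + 1 ≤ (N₂:ℤ)) {i : ℤ} (hi : i < -(N₂:ℤ)) :
    e r i • S s N₂ v - e s i • S r N₂ v
      = (if r = 0 then S s N₂ v else 0) - (if s = 0 then S r N₂ v else 0) := by
  have habs : |s + r| = |r + s| := by rw [add_comm]
  rw [L3neg hv r s (by omega) hi, L3neg hv s r (by omega) hi]
  by_cases h : r + s = 0
  · have e1 : i - s = i + r := by omega
    have e2 : i - r = i + s := by omega
    rw [e1, e2, sub_self, sub_self, zero_smul, zero_smul, add_zero, add_zero]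
  · rw [if_neg h, if_neg (by omega : ¬ s + r = 0), smul_zero, smul_zero, add_zero, add_zero]

lemma DS_eq {M : ℕ} {v : FockF} (hv : annB M v) (r s : ℤ) {N₂ N₁ : ℕ}
    (h2 : (M:ℤ) + |r| + |s| + |r + s| + 1 ≤ (N₂:ℤ)) (h12 : N₂ ≤ N₁) :
    S r N₁ (S s N₂ v) - S s N₁ (S r N₂ v)
      = (if r + s = 0 then (r:ℤ) else 0) • v
        + (N₁ - N₂ : ℕ) •
            ((if r = 0 then S s N₂ v else 0) - (if s = 0 then S r N₂ v else 0)) := by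
  have h12' : (N₂:ℤ) ≤ (N₁:ℤ) := by exact_mod_cast h12
  have hsplit : ∀ a b : ℤ, (M:ℤ) + |a| + |b| + |a + b| + 1 ≤ (N₂:ℤ) →
      S a N₁ (S b N₂ v)
        = (∑ i ∈ Finset.Icc (-(N₁:ℤ)) (-(N₂:ℤ) - 1), e a i • S b N₂ v)
          + S a N₂ (S b N₂ v) := by
    intro a b hab
    have h1 : S a N₁ (S b N₂ v)
        = ∑ i ∈ Finset.Icc (-(N₁:ℤ)) (N₁:ℤ), e a i • S b N₂ v := rfl
    rw [h1, sum_Icc_split _ _ (-(N₂:ℤ)) _ (by omega) (by omega),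
      sum_Icc_split _ (-(N₂:ℤ)) ((N₂:ℤ) + 1) _ (by omega) (by omega)]
    have hmid : ∑ i ∈ Finset.Icc (-(N₂:ℤ)) ((N₂:ℤ) + 1 - 1), e a i • S b N₂ v
        = S a N₂ (S b N₂ v) := by
      rw [show (N₂:ℤ) + 1 - 1 = (N₂:ℤ) by omega]
      rfl
    have hright : ∑ i ∈ Finset.Icc ((N₂:ℤ) + 1) (N₁:ℤ), e a i • S b N₂ v = 0 :=
      sum_Icc_zero _ _ _ fun i hi1 hi2 => L3pos hv a b (by omega) (by omega)
    rw [hmid, hright, add_zero]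
  have habs : |s + r| = |r + s| := by rw [add_comm]
  rw [hsplit r s h2, hsplit s r (by omega)]
  have htail : (∑ i ∈ Finset.Icc (-(N₁:ℤ)) (-(N₂:ℤ) - 1), e r i • S s N₂ v)
      - (∑ i ∈ Finset.Icc (-(N₁:ℤ)) (-(N₂:ℤ) - 1), e s i • S r N₂ v)
      = (N₁ - N₂ : ℕ) •
          ((if r = 0 then S s N₂ v else 0) - (if s = 0 then S r N₂ v else 0)) := by
    rw [← Finset.sum_sub_distrib,
      sum_Icc_const _ _ _ _ (fun i hi1 hi2 => bterm hv r s h2 (by omega))]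
    congr 1
    omega
  have hA := partA hv r s (by omega : (M:ℤ) + |r| + |s| + |r + s| + 1 ≤ (N₂:ℤ))
  calc (∑ i ∈ Finset.Icc (-(N₁:ℤ)) (-(N₂:ℤ) - 1), e r i • S s N₂ v) + S r N₂ (S s N₂ v)
        - ((∑ i ∈ Finset.Icc (-(N₁:ℤ)) (-(N₂:ℤ) - 1), e s i • S r N₂ v) + S s N₂ (S r N₂ v))
      = (S r N₂ (S s N₂ v) - S s N₂ (S r N₂ v))
        + ((∑ i ∈ Finset.Icc (-(N₁:ℤ)) (-(N₂:ℤ) - 1), e r i • S s N₂ v)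
          - (∑ i ∈ Finset.Icc (-(N₁:ℤ)) (-(N₂:ℤ) - 1), e s i • S r N₂ v)) := by abel
    _ = (if r + s = 0 then (r:ℤ) else 0) • v
        + (N₁ - N₂ : ℕ) •
            ((if r = 0 then S s N₂ v else 0) - (if s = 0 then S r N₂ v else 0)) := by
      rw [hA, htail]

lemma term_eq (a j : ℤ) :
    (if 0 ≤ j + a then ψ true (-j - 1) * ψ false (j + a)
      else -(ψ false (j + a) * ψ true (-j - 1)))
      = e a j - (if a = 0 ∧ j < 0 then 1 else 0) := by
  by_cases h : 0 ≤ j + a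
  · rw [if_pos h, if_neg (by rintro ⟨h1, h2⟩; omega), sub_zero]
    rfl
  · rw [if_neg h, psi_mixed' (-j - 1) (j + a), neg_sub]
    congr 1
    by_cases ha : a = 0
    · rw [if_pos (by omega), if_pos ⟨ha, by omega⟩]
    · rw [if_neg (by omega), if_neg (by rintro ⟨h1, h2⟩; omega)]

lemma αTrunc_smul (a : ℤ) (N : ℕ) (u : FockF) :
    αTrunc a N • u = S a N u - (if a = 0 then (N • u) else 0) := by
  rw [αTrunc, Finset.sum_smul,
    Finset.sum_congr rfl fun j _ => by rw [term_eq, sub_smul],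
    Finset.sum_sub_distrib]
  congr 1
  have hterm : ∀ j : ℤ, ((if a = 0 ∧ j < 0 then (1:CL) else 0) • u)
      = (if a = 0 ∧ j < 0 then u else 0) := by
    intro j
    split_ifs
    · exact one_smul _ _
    · exact zero_smul _ _
  rw [Finset.sum_congr rfl fun j _ => hterm j]
  by_cases ha : a = 0
  · rw [if_pos ha]
    have : ∀ j ∈ Finset.Icc (-(N:ℤ)) (N:ℤ), (if a = 0 ∧ j < 0 then u else 0)
        = (if j < 0 then u else 0) := by
      intro j _
      by_cases hj : j < 0
      · rw [if_pos ⟨ha, hj⟩, if_pos hj]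
      · rw [if_neg (by rintro ⟨h1, h2⟩; omega), if_neg hj]
    rw [Finset.sum_congr rfl this, ← Finset.sum_filter]
    have hset : Finset.filter (fun j => j < 0) (Finset.Icc (-(N:ℤ)) (N:ℤ))
        = Finset.Icc (-(N:ℤ)) (-1) := by
      ext x
      simp only [Finset.mem_filter, Finset.mem_Icc]
      omega
    rw [hset, Finset.sum_const, Int.card_Icc]
    congr 1
    omega
  · rw [if_neg ha]
    exact sum_Icc_zero _ _ _ fun j _ _ => by rw [if_neg (by rintro ⟨h1, h2⟩; omega)]
-- stage 8: main computation
lemma MCL {M : ℕ} {v : FockF} (hv : annB M v) (r s : ℤ) {N₂ N₁ : ℕ}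
    (h2 : (M:ℤ) + |r| + |s| + |r + s| + 1 ≤ (N₂:ℤ)) (h12 : N₂ ≤ N₁) :
    αTrunc r N₁ • (αTrunc s N₂ • v) - αTrunc s N₁ • (αTrunc r N₂ • v)
      = (if r + s = 0 then (r:ℤ) else 0) • v := by
  have har := abs_nonneg r; have has := abs_nonneg s; have hars := abs_nonneg (r+s)
  have har1 := neg_abs_le r; have har2 := le_abs_self r
  have has1 := neg_abs_le s; have has2 := le_abs_self s
  by_cases hr0 : r = 0 <;> by_cases hs0 : s = 0
  · subst hr0; subst hs0
    rw [sub_self]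
    simp
  · -- r = 0, s ≠ 0
    subst hr0
    have hRHS : (if 0 + s = 0 then (0:ℤ) else 0) • v = 0 := by split_ifs <;> simp
    rw [hRHS,
      αTrunc_smul s N₂ v, if_neg hs0, sub_zero,
      αTrunc_smul 0 N₂ v, if_pos rfl,
      αTrunc_smul 0 N₁ (S s N₂ v), if_pos rfl,
      αTrunc_smul s N₁ _, if_neg hs0, sub_zero, S_sub, S_nsmul]
    have hDS := DS_eq hv 0 s h2 h12
    rw [if_neg (by omega : ¬ (0:ℤ) + s = 0), zero_smul, zero_add, if_pos rfl,
      if_neg hs0, sub_zero] at hDS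
    have hTail : S s N₁ v = S s N₂ v := by
      rw [S_tail hv s (by omega) h12, if_neg hs0, smul_zero, add_zero]
    rw [hTail]
    have hre : (S 0 N₁ (S s N₂ v) - N₁ • S s N₂ v)
          - (S s N₁ (S 0 N₂ v) - N₂ • S s N₂ v)
        = (S 0 N₁ (S s N₂ v) - S s N₁ (S 0 N₂ v)) + N₂ • S s N₂ v - N₁ • S s N₂ v := by
      abel
    rw [hre, hDS, ← add_smul, Nat.sub_add_cancel h12, sub_self]
  · -- r ≠ 0, s = 0
    subst hs0
    have hRHS : (if r + 0 = 0 then (r:ℤ) else 0) • v = 0 := by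
      rw [if_neg (by omega), zero_smul]
    rw [hRHS,
      αTrunc_smul 0 N₂ v, if_pos rfl,
      αTrunc_smul r N₂ v, if_neg hr0, sub_zero,
      αTrunc_smul r N₁ _, if_neg hr0, sub_zero, S_sub, S_nsmul,
      αTrunc_smul 0 N₁ (S r N₂ v), if_pos rfl]
    have hDS := DS_eq hv r 0 (by omega) h12
    rw [if_neg (by omega : ¬ r + 0 = 0), zero_smul, zero_add, if_neg hr0, if_pos rfl,
      zero_sub, smul_neg] at hDS
    have hTail : S r N₁ v = S r N₂ v := by
      rw [S_tail hv r (by omega) h12, if_neg hr0, smul_zero, add_zero]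
    rw [hTail]
    have hre : (S r N₁ (S 0 N₂ v) - N₂ • S r N₂ v)
          - (S 0 N₁ (S r N₂ v) - N₁ • S r N₂ v)
        = (S r N₁ (S 0 N₂ v) - S 0 N₁ (S r N₂ v)) + N₁ • S r N₂ v - N₂ • S r N₂ v := by
      abel
    rw [hre, hDS]
    have h3 : (N₁ - N₂ : ℕ) • S r N₂ v + N₂ • S r N₂ v = N₁ • S r N₂ v := by
      rw [← add_smul, Nat.sub_add_cancel h12]
    rw [← h3]
    abel
  · -- r ≠ 0, s ≠ 0
    rw [αTrunc_smul s N₂ v, if_neg hs0, sub_zero,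
      αTrunc_smul r N₂ v, if_neg hr0, sub_zero,
      αTrunc_smul r N₁ _, if_neg hr0, sub_zero,
      αTrunc_smul s N₁ _, if_neg hs0, sub_zero,
      DS_eq hv r s h2 h12, if_neg hr0, if_neg hs0]
    simp
-- stage 9: stabilization and the operators
lemma exists_stab (r : ℤ) (v : FockF) :
    ∃ N₀ : ℕ, ∀ N : ℕ, N₀ ≤ N → αTrunc r N • v = αTrunc r N₀ • v := by
  obtain ⟨M, hv⟩ := exists_annB v
  refine ⟨M + r.natAbs, fun N hN => ?_⟩
  have habs : ((r.natAbs : ℕ) : ℤ) = |r| := (Int.abs_eq_natAbs r).symm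
  have hle : (M:ℤ) + |r| ≤ ((M + r.natAbs : ℕ) : ℤ) := by push_cast; omega
  rw [αTrunc_smul r N v, αTrunc_smul r (M + r.natAbs) v, S_tail hv r hle hN]
  by_cases hr : r = 0
  · rw [if_pos hr, if_pos hr, if_pos hr]
    have h3 : (N - (M + r.natAbs) : ℕ) • v + (M + r.natAbs) • v = N • v := by
      rw [← add_smul, Nat.sub_add_cancel hN]
    rw [← h3]
    abel
  · rw [if_neg hr, if_neg hr, if_neg hr, smul_zero, add_zero, sub_zero]

noncomputable def stabN (r : ℤ) (v : FockF) : ℕ := (exists_stab r v).choose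

lemma stabN_spec (r : ℤ) (v : FockF) :
    ∀ N : ℕ, stabN r v ≤ N → αTrunc r N • v = αTrunc r (stabN r v) • v :=
  (exists_stab r v).choose_spec

noncomputable def Aop (r : ℤ) : FockF →ₗ[ℂ] FockF where
  toFun v := αTrunc r (stabN r v) • v
  map_add' v w := by
    set P := max (stabN r (v + w)) (max (stabN r v) (stabN r w)) with hP
    rw [← stabN_spec r (v + w) P (le_max_left _ _),
      ← stabN_spec r v P (le_trans (le_max_left _ _) (le_max_right _ _)),
      ← stabN_spec r w P (le_trans (le_max_right _ _) (le_max_right _ _)),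
      smul_add]
  map_smul' c v := by
    set P := max (stabN r (c • v)) (stabN r v) with hP
    rw [← stabN_spec r (c • v) P (le_max_left _ _),
      ← stabN_spec r v P (le_max_right _ _)]
    simp only [RingHom.id_apply]
    rw [smul_comm]

lemma Aop_apply (r : ℤ) (v : FockF) : Aop r v = αTrunc r (stabN r v) • v := rfl

/- STATEMENT 12: the fermionic currents α(r) (well defined on F: on any fixed
vector the truncations stabilize) satisfy the level-one Heisenberg relations
[α(r), α(s)] = r δ_{r+s,0} on F. -/
theorem fermionic_heisenberg_level_one :
    ∃ A : ℤ → (FockF →ₗ[ℂ] FockF),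
      (∀ (r : ℤ) (v : FockF), ∃ N₀ : ℕ, ∀ N ≥ N₀, A r v = αTrunc r N • v)
      ∧ (∀ (r s : ℤ) (v : FockF),
          A r (A s v) - A s (A r v)
            = (if r + s = 0 then (r : ℂ) else 0) • v) := by
  refine ⟨fun r => Aop r, fun r v => ⟨stabN r v, fun N hN => ?_⟩, fun r s v => ?_⟩
  · rw [Aop_apply, stabN_spec r v N hN]
  · obtain ⟨M, hv⟩ := exists_annB v
    set N₂ := max (stabN s v) (max (stabN r v)
      (M + r.natAbs + s.natAbs + (r + s).natAbs + 1)) with hN₂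
    set N₁ := max N₂ (max (stabN r (αTrunc s N₂ • v)) (stabN s (αTrunc r N₂ • v))) with hN₁
    have habr : ((r.natAbs : ℕ) : ℤ) = |r| := (Int.abs_eq_natAbs r).symm
    have habs : ((s.natAbs : ℕ) : ℤ) = |s| := (Int.abs_eq_natAbs s).symm
    have habrs : (((r+s).natAbs : ℕ) : ℤ) = |r + s| := (Int.abs_eq_natAbs (r+s)).symm
    have hN₂ge : (M + r.natAbs + s.natAbs + (r + s).natAbs + 1 : ℕ) ≤ N₂ :=
      le_trans (le_max_right _ _) (le_max_right _ _)
    have h2 : (M:ℤ) + |r| + |s| + |r + s| + 1 ≤ (N₂:ℤ) := by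
      have := (Nat.cast_le (α := ℤ)).mpr hN₂ge
      push_cast at this
      omega
    have h12 : N₂ ≤ N₁ := le_max_left _ _
    have e1 : Aop s v = αTrunc s N₂ • v :=
      (stabN_spec s v N₂ (le_max_left _ _)).symm
    have e2 : Aop r v = αTrunc r N₂ • v :=
      (stabN_spec r v N₂ (le_trans (le_max_left _ _) (le_max_right _ _))).symm
    have e3 : Aop r (αTrunc s N₂ • v) = αTrunc r N₁ • (αTrunc s N₂ • v) :=
      (stabN_spec r (αTrunc s N₂ • v) N₁
        (le_trans (le_max_left _ _) (le_max_right _ _))).symm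
    have e4 : Aop s (αTrunc r N₂ • v) = αTrunc s N₁ • (αTrunc r N₂ • v) :=
      (stabN_spec s (αTrunc r N₂ • v) N₁
        (le_trans (le_max_right _ _) (le_max_right _ _))).symm
    show Aop r (Aop s v) - Aop s (Aop r v) = _
    rw [e1, e2, e3, e4, MCL hv r s h2 h12]
    by_cases h : r + s = 0
    · rw [if_pos h, if_pos h]
      exact (Int.cast_smul_eq_zsmul ℂ r v).symm
    · rw [if_neg h, if_neg h, zero_smul]
      exact (zero_smul ℂ v).symm
end

section
/- Strong generation of the charge-zero commutative algebra: the subalgebra M₀ of M = ℂ[a^+(−m−1/2), a^−(−m−1/2) : m ≥ 0] consisting of charge-zero elements is generated, as a differential algebra under the derivation ∂ defined by ∂a^±(−m−1/2) = (m+1/2)a^±(−m−3/2), by the elements a^+(−1/2)a^−(−m−1/2) for m ≥ 0. Equivalently, every monomial a^+(−n_1−1/2)⋯a^+(−n_r−1/2)a^−(−k_1−1/2)⋯a^−(−k_r−1/2) lies in the subalgebra generated by {∂^j(a^+(−1/2)a^−(−m−1/2)) : j, m ≥ 0}. -/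
/- Strong generation of M₀: the charge-zero subalgebra of
   M = ℂ[a^±(−m−1/2) : m ≥ 0] is generated, as an algebra, by the iterated
   derivatives ∂^j (a⁺(−1/2)·a⁻(−m−1/2)), j, m ≥ 0, where ∂ is the derivation
   with ∂a^±(−m−1/2) = (m+1/2)·a^±(−m−3/2).  Equivalently, every charge-zero
   monomial — a product of equally many a⁺- and a⁻-variables, encoded by a
   pair of multisets A, B over ℤ≥0 of equal cardinality — lies in the
   subalgebra generated by these elements. -/

/-- The variable `(ε, m)` stands for `a^ε(−m−1/2)`. -/
abbrev MPoly := MvPolynomial (Bool × ℕ) ℂ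

/-- The translation derivation `∂`, with `∂ a^±(−m−1/2) = (m+1/2) a^±(−m−3/2)`. -/
noncomputable def dM : Derivation ℂ MPoly MPoly :=
  MvPolynomial.mkDerivation ℂ fun v =>
    ((v.2 : ℂ) + 1 / 2) • MvPolynomial.X ((v.1, v.2 + 1) : Bool × ℕ)

def Sgen : Set MPoly :=
  {x : MPoly | ∃ j m : ℕ,
    x = (dM.toLinearMap ^ j)
          (MvPolynomial.X ((true, 0) : Bool × ℕ) *
            MvPolynomial.X ((false, m) : Bool × ℕ))}

lemma dM_X (v : Bool × ℕ) :
    dM (MvPolynomial.X v) = ((v.2 : ℂ) + 1 / 2) • MvPolynomial.X ((v.1, v.2 + 1) : Bool × ℕ) := by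
  simp [dM, MvPolynomial.mkDerivation_X]

lemma Sgen_dclosed {x : MPoly} (hx : x ∈ Sgen) : dM x ∈ Sgen := by
  obtain ⟨j, m, rfl⟩ := hx
  exact ⟨j + 1, m, by rw [pow_succ']; rfl⟩

lemma adjoin_dclosed {x : MPoly} (hx : x ∈ Algebra.adjoin ℂ Sgen) :
    dM x ∈ Algebra.adjoin ℂ Sgen := by
  induction hx using Algebra.adjoin_induction with
  | mem y hy => exact Algebra.subset_adjoin (Sgen_dclosed hy)
  | algebraMap r => rw [Derivation.map_algebraMap]; exact zero_mem _
  | add y z _ _ hy hz => rw [map_add]; exact add_mem hy hz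
  | mul y z hy' hz' hy hz =>
      rw [Derivation.leibniz, smul_eq_mul, smul_eq_mul]
      exact add_mem (mul_mem hy' hz) (mul_mem hz' hy)

lemma quad_mem (n k : ℕ) :
    (MvPolynomial.X ((true, n) : Bool × ℕ) *
      MvPolynomial.X ((false, k) : Bool × ℕ) : MPoly) ∈ Algebra.adjoin ℂ Sgen := by
  induction n generalizing k with
  | zero => exact Algebra.subset_adjoin ⟨0, k, by simp⟩
  | succ n ih =>
      have hder : dM (MvPolynomial.X ((true, n) : Bool × ℕ) *
          MvPolynomial.X ((false, k) : Bool × ℕ)) =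
          ((n : ℂ) + 1 / 2) • (MvPolynomial.X ((true, n + 1) : Bool × ℕ) *
              MvPolynomial.X ((false, k) : Bool × ℕ)) +
          ((k : ℂ) + 1 / 2) • (MvPolynomial.X ((true, n) : Bool × ℕ) *
              MvPolynomial.X ((false, k + 1) : Bool × ℕ)) := by
        rw [Derivation.leibniz, dM_X, dM_X, smul_eq_mul, smul_eq_mul,
          mul_smul_comm, mul_smul_comm, mul_comm (MvPolynomial.X ((false, k) : Bool × ℕ)),
          add_comm]
      have h1 : ((n : ℂ) + 1 / 2) • (MvPolynomial.X ((true, n + 1) : Bool × ℕ) *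
          MvPolynomial.X ((false, k) : Bool × ℕ) : MPoly) ∈ Algebra.adjoin ℂ Sgen := by
        have := adjoin_dclosed (ih k)
        rw [hder] at this
        have := Subalgebra.sub_mem _ this (Subalgebra.smul_mem _ (ih (k + 1)) ((k : ℂ) + 1 / 2))
        simpa using this
      have hne : ((n : ℂ) + 1 / 2) ≠ 0 := by
        intro h
        have : (n : ℂ) = -(1/2) := by linear_combination h
        have := congrArg Complex.re this
        simp at this
        norm_num at this
        linarith [this, Nat.cast_nonneg (α := ℝ) n]
      have := Subalgebra.smul_mem _ h1 ((n : ℂ) + 1 / 2)⁻¹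
      rwa [smul_smul, inv_mul_cancel₀ hne, one_smul] at this

theorem M0_strongly_generated :
    ∀ A B : Multiset ℕ, Multiset.card A = Multiset.card B →
      ((A.map fun n => MvPolynomial.X ((true, n) : Bool × ℕ)).prod *
          (B.map fun n => MvPolynomial.X ((false, n) : Bool × ℕ)).prod : MPoly)
        ∈ Algebra.adjoin ℂ
            {x : MPoly | ∃ j m : ℕ,
              x = (dM.toLinearMap ^ j)
                    (MvPolynomial.X ((true, 0) : Bool × ℕ) *
                      MvPolynomial.X ((false, m) : Bool × ℕ))} := by
  have key : ∀ A B : Multiset ℕ, Multiset.card A = Multiset.card B →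
      ((A.map fun n => MvPolynomial.X ((true, n) : Bool × ℕ)).prod *
          (B.map fun n => MvPolynomial.X ((false, n) : Bool × ℕ)).prod : MPoly)
        ∈ Algebra.adjoin ℂ Sgen := by
    intro A
    induction A using Multiset.induction with
    | empty =>
        intro B hB
        have : B = 0 := by
          simpa using (Multiset.card_eq_zero.mp hB.symm)
        subst this
        simpa using one_mem _
    | cons n A ih =>
        intro B hB
        have hBne : B ≠ 0 := by
          intro h; subst h; simp at hB
        obtain ⟨k, hk⟩ := Multiset.exists_mem_of_ne_zero hBne
        obtain ⟨B', rfl⟩ := Multiset.exists_cons_of_mem hk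
        have hcard : Multiset.card A = Multiset.card B' := by
          simpa using hB
        have := mul_mem (quad_mem n k) (ih B' hcard)
        simp only [Multiset.map_cons, Multiset.prod_cons]
        convert this using 1
        ring
  exact key
end
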